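/- Every W ∈ SU(2) whose diagonal entries are real admits a square root B ∈ SU(2) whose diagonal entries are also real, i.e., B² = W. -/

import Mathlib

/-!
Every element of SU(2) is `su2Mat α β = [[α, -β̄], [β, ᾱ]]` with `|α|² + |β|² = 1`, so a real
diagonal means `W = su2Mat a b` with `a` real. For real `c`, `(su2Mat c d)² = su2Mat (c² - |d|²) (2cd)`,
so it suffices to halve the "angle" of `(a, b)`: take `c = √((1 + a)/2)` and `d = b/(2c)`, except at
`W = -1`, where `c = 0`, `d = 1` does it.
-/

open Complex ComplexConjugate

namespace Matrix

def su2Mat (α β : ℂ) : Matrix (Fin 2) (Fin 2) ℂ := !![α, -conj β; β, conj α]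

@[simp] lemma su2Mat_apply_zero_zero (α β : ℂ) : su2Mat α β 0 0 = α := rfl

@[simp] lemma su2Mat_apply_one_one (α β : ℂ) : su2Mat α β 1 1 = conj α := rfl

lemma su2Mat_one_zero : su2Mat 1 0 = 1 := by
  rw [su2Mat, one_fin_two]
  simp

lemma su2Mat_mul (α β γ δ : ℂ) :
    su2Mat α β * su2Mat γ δ = su2Mat (α * γ - conj β * δ) (β * γ + conj α * δ) := by
  simp only [su2Mat, mul_fin_two, map_sub, map_add, map_mul, conj_conj]
  congr 1
  ring_nf

lemma star_su2Mat (α β : ℂ) : star (su2Mat α β) = su2Mat (conj α) (-β) := by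
  ext i j
  fin_cases i <;> fin_cases j <;> simp [su2Mat]

lemma det_su2Mat (α β : ℂ) : (su2Mat α β).det = normSq α + normSq β := by
  rw [su2Mat, det_fin_two_of, ← mul_conj, ← mul_conj]
  ring

lemma su2Mat_mem_specialUnitaryGroup {α β : ℂ} (h : normSq α + normSq β = 1) :
    su2Mat α β ∈ specialUnitaryGroup (Fin 2) ℂ := by
  refine mem_specialUnitaryGroup_iff.mpr ⟨mem_unitaryGroup_iff'.mpr ?_, ?_⟩
  · rw [star_su2Mat, su2Mat_mul, conj_conj, ← su2Mat_one_zero]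
    congr 1
    · rw [map_neg, neg_mul, sub_neg_eq_add, ← normSq_eq_conj_mul_self,
        ← normSq_eq_conj_mul_self]
      exact_mod_cast h
    · ring
  · rw [det_su2Mat]
    exact_mod_cast h

lemma eq_su2Mat_of_mem_specialUnitaryGroup {W : Matrix (Fin 2) (Fin 2) ℂ}
    (hW : W ∈ specialUnitaryGroup (Fin 2) ℂ) : W = su2Mat (W 0 0) (W 1 0) := by
  obtain ⟨hU, hdet⟩ := mem_specialUnitaryGroup_iff.mp hW
  have hstar : star W = adjugate W := by
    rw [← inv_eq_left_inv (mem_unitaryGroup_iff'.mp hU), inv_def, hdet, Ring.inverse_one, one_smul]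
  have h11 : W 1 1 = conj (W 0 0) := by
    simpa [adjugate_fin_two, star_apply] using (congrFun (congrFun hstar 0) 0).symm
  have h01 : W 0 1 = -conj (W 1 0) := by
    simpa [adjugate_fin_two, star_apply, neg_eq_iff_eq_neg] using
      (congrFun (congrFun hstar 0) 1).symm
  rw [eta_fin_two W, h11, h01]
  rfl

lemma su2Mat_ofReal_mul_self (c : ℝ) (d : ℂ) :
    su2Mat c d * su2Mat c d = su2Mat ((c ^ 2 - normSq d : ℝ)) (2 * c * d) := by
  rw [su2Mat_mul, conj_ofReal, ← normSq_eq_conj_mul_self]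
  push_cast
  ring_nf

end Matrix

lemma exists_halfAngle_of_sq_add_normSq_eq_one {a : ℝ} {b : ℂ} (h : a ^ 2 + normSq b = 1) :
    ∃ (c : ℝ) (d : ℂ), c ^ 2 + normSq d = 1 ∧ c ^ 2 - normSq d = a ∧ 2 * c * d = b := by
  rcases eq_or_ne (1 + a) 0 with ha | ha
  · have hb : b = 0 := normSq_eq_zero.mp (by nlinarith [normSq_nonneg b])
    exact ⟨0, 1, by simp, by simp; linarith, by simp [hb]⟩
  · have hpos : 0 < 1 + a := lt_of_le_of_ne' (by nlinarith [normSq_nonneg b]) ha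
    set c := √((1 + a) / 2)
    have hc : c ^ 2 = (1 + a) / 2 := Real.sq_sqrt (by positivity)
    have hc0 : c ≠ 0 := (Real.sqrt_pos.mpr (by positivity)).ne'
    have hd : normSq (b / (2 * c)) = (1 - a) / 2 := by
      rw [normSq_div, normSq_mul, normSq_ofReal, normSq_ofNat, ← sq, ← sq, hc,
        eq_sub_of_add_eq' h]
      field_simp
      ring
    refine ⟨c, b / (2 * c), by rw [hc, hd]; ring, by rw [hc, hd]; ring, ?_⟩
    exact mul_div_cancel₀ b (by simpa using hc0)

open Matrix in
theorem su2_real_diag_sqrt_general (W : Matrix (Fin 2) (Fin 2) ℂ)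
    (hW : W ∈ Matrix.unitaryGroup (Fin 2) ℂ) (hdet : W.det = 1)
    (h00 : (W 0 0).im = 0) :
    ∃ B : Matrix (Fin 2) (Fin 2) ℂ,
      B ∈ Matrix.unitaryGroup (Fin 2) ℂ ∧ B.det = 1 ∧
      (B 0 0).im = 0 ∧ (B 1 1).im = 0 ∧ B * B = W := by
  set a := (W 0 0).re
  have hWa : W = su2Mat a (W 1 0) := by
    rw [← show W 0 0 = a from Complex.ext rfl h00]
    exact eq_su2Mat_of_mem_specialUnitaryGroup (mem_specialUnitaryGroup_iff.mpr ⟨hW, hdet⟩)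
  have hab : a ^ 2 + normSq (W 1 0) = 1 := by
    rw [hWa, det_su2Mat, normSq_ofReal, ← sq] at hdet
    exact_mod_cast hdet
  obtain ⟨c, d, hcd, hre, hmul⟩ := exists_halfAngle_of_sq_add_normSq_eq_one hab
  obtain ⟨hBU, hBdet⟩ := mem_specialUnitaryGroup_iff.mp
    (su2Mat_mem_specialUnitaryGroup (α := c) (β := d) (by rwa [normSq_ofReal, ← sq]))
  refine ⟨su2Mat c d, hBU, hBdet, by simp, by simp, ?_⟩
  rw [su2Mat_ofReal_mul_self, hre, hmul, ← hWa]

theorem su2_real_diag_sqrt (W : Matrix (Fin 2) (Fin 2) ℂ)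
    (hW : W ∈ Matrix.unitaryGroup (Fin 2) ℂ) (hdet : W.det = 1)
    (h00 : (W 0 0).im = 0) (h11 : (W 1 1).im = 0) :
    ∃ B : Matrix (Fin 2) (Fin 2) ℂ,
      B ∈ Matrix.unitaryGroup (Fin 2) ℂ ∧ B.det = 1 ∧
      (B 0 0).im = 0 ∧ (B 1 1).im = 0 ∧ B * B = W :=
  su2_real_diag_sqrt_general W hW hdet h00
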